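/- arXiv:1901.09372 — 2 statements merged into one kernel-verified Lean document; each statement's English description precedes it below -/
import Mathlib

section
/- Let b_s, b_t, c_s, c_t be integers with |b_s| = |b_t| ≠ 0, and suppose that (b_s = b_t implies c_s ≠ c_t) and (b_s = −b_t implies c_s ≠ −c_t). Then there exists at most one nonzero integer θ such that |b_s + θ·c_s| = |b_t + θ·c_t|. -/
/-!
Since `bt = ±bs`, after replacing `ct` by `-ct` in the second case both sides share the
constant `bs`. With `cs ≠ ct`, the equality `|b + θ cs| = |b + θ ct|` can only hold through
`b + θ cs = -(b + θ ct)`, i.e. `θ (cs + ct) = -2b`; as `b ≠ 0`, this linear equation has at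
most one solution.
-/

section

variable {R : Type*} [CommRing R] [LinearOrder R] [IsStrictOrderedRing R]

theorem mul_add_eq_neg_two_mul_of_abs_add_mul_eq {b c d θ : R} (hcd : c ≠ d) (hθ : θ ≠ 0)
    (h : |b + θ * c| = |b + θ * d|) : θ * (c + d) = -2 * b := by
  rcases abs_eq_abs.mp h with h | h
  · exact absurd (mul_left_cancel₀ hθ (add_left_cancel h)) hcd
  · linear_combination h

theorem subsingleton_setOf_abs_add_mul_eq {b c d : R} (hb : b ≠ 0) (hcd : c ≠ d) :
    {θ : R | θ ≠ 0 ∧ |b + θ * c| = |b + θ * d|}.Subsingleton := by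
  rintro θ₁ ⟨hθ₁, h₁⟩ θ₂ ⟨hθ₂, h₂⟩
  have e₁ := mul_add_eq_neg_two_mul_of_abs_add_mul_eq hcd hθ₁ h₁
  have e₂ := mul_add_eq_neg_two_mul_of_abs_add_mul_eq hcd hθ₂ h₂
  have hcd0 : c + d ≠ 0 := by
    rintro hcd0
    rw [hcd0, mul_zero, eq_comm, mul_eq_zero] at e₁
    exact e₁.elim (by norm_num) hb
  exact mul_right_cancel₀ hcd0 (e₁.trans e₂.symm)

end

theorem stmt_2 (bs bt cs ct : ℤ) (hb : |bs| = |bt|) (hb0 : bs ≠ 0)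
    (h1 : bs = bt → cs ≠ ct) (h2 : bs = -bt → cs ≠ -ct) :
    {θ : ℤ | θ ≠ 0 ∧ |bs + θ * cs| = |bt + θ * ct|}.Subsingleton := by
  rcases abs_eq_abs.mp hb with rfl | hbt
  · exact subsingleton_setOf_abs_add_mul_eq hb0 (h1 rfl)
  · obtain rfl : bt = -bs := by rw [hbt, neg_neg]
    have hc : cs ≠ -ct := h2 (neg_neg bs).symm
    refine (subsingleton_setOf_abs_add_mul_eq hb0 hc).anti fun θ ⟨hθ, h⟩ => ⟨hθ, ?_⟩
    rw [h, ← abs_neg]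
    congr 1; ring
end

section
/- Let 0 < γ < 1 and let η > 0. Suppose n is a positive integer with (n+1)^γ − n^γ ≤ η. If n ∈ {⌊m^{1/γ}⌋ : m ∈ ℕ}, then either 1 − {n^γ} ≤ η or {n^γ} = 0. -/
/-!
Writing `n = ⌊m ^ (1/γ)⌋` and raising `n ≤ m ^ (1/γ) < n + 1` to the power `γ` gives
`n ^ γ ≤ m < (n + 1) ^ γ`. So the integer `m` lies in the gap `[n ^ γ, (n + 1) ^ γ)` of length
at most `η`: either `n ^ γ = m` is an integer, or the distance `1 - {n ^ γ}` from `n ^ γ` up to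
the next integer is at most `m - n ^ γ < η`.
-/

theorem Int.fract_eq_zero_or_one_sub_fract_le_of_le_intCast {x : ℝ} {m : ℤ} (h : x ≤ m) :
    Int.fract x = 0 ∨ 1 - Int.fract x ≤ m - x := by
  rcases h.eq_or_lt with rfl | hlt
  · exact Or.inl (Int.fract_intCast m)
  · right
    have hfloor : ⌊x⌋ < m := Int.floor_lt.mpr hlt
    have hfloor' : (⌊x⌋ : ℝ) + 1 ≤ m := by exact_mod_cast hfloor
    rw [Int.fract]
    linarith

theorem Real.rpow_le_natCast_lt_rpow_of_eq_floor {γ : ℝ} (hγ : 0 < γ) {n m : ℕ}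
    (hn : (n : ℤ) = ⌊(m : ℝ) ^ (1 / γ)⌋) :
    (n : ℝ) ^ γ ≤ m ∧ (m : ℝ) < ((n : ℝ) + 1) ^ γ := by
  obtain ⟨hle, hlt⟩ := Int.floor_eq_iff.mp hn.symm
  push_cast at hle hlt
  have hroot : ((m : ℝ) ^ (1 / γ)) ^ γ = m := by
    rw [← Real.rpow_mul m.cast_nonneg, one_div_mul_cancel hγ.ne', Real.rpow_one]
  constructor
  · calc (n : ℝ) ^ γ ≤ ((m : ℝ) ^ (1 / γ)) ^ γ := by gcongr
      _ = m := hroot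
  · calc (m : ℝ) = ((m : ℝ) ^ (1 / γ)) ^ γ := hroot.symm
      _ < ((n : ℝ) + 1) ^ γ := by gcongr

theorem stmt_6_general (γ : ℝ) (hγ0 : 0 < γ) (η : ℝ)
    (n : ℕ) (hgap : ((n : ℝ) + 1) ^ γ - (n : ℝ) ^ γ ≤ η)
    (hmem : ∃ m : ℕ, (n : ℤ) = ⌊(m : ℝ) ^ (1/γ)⌋) :
    1 - Int.fract ((n : ℝ) ^ γ) ≤ η ∨ Int.fract ((n : ℝ) ^ γ) = 0 := by
  obtain ⟨m, hm⟩ := hmem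
  obtain ⟨hle, hlt⟩ := Real.rpow_le_natCast_lt_rpow_of_eq_floor hγ0 hm
  rcases Int.fract_eq_zero_or_one_sub_fract_le_of_le_intCast (m := m) (by exact_mod_cast hle)
    with hzero | hdist
  · exact Or.inr hzero
  · left
    push_cast at hdist
    linarith

theorem stmt_6 (γ : ℝ) (hγ0 : 0 < γ) (hγ1 : γ < 1) (η : ℝ) (hη : 0 < η)
    (n : ℕ) (hn : 0 < n) (hgap : ((n : ℝ) + 1) ^ γ - (n : ℝ) ^ γ ≤ η)
    (hmem : ∃ m : ℕ, (n : ℤ) = ⌊(m : ℝ) ^ (1/γ)⌋) :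
    1 - Int.fract ((n : ℝ) ^ γ) ≤ η ∨ Int.fract ((n : ℝ) ^ γ) = 0 :=
  stmt_6_general γ hγ0 η n hgap hmem
end
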